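/- For λ ≥ ‖P_Ω(X)‖₂ (the largest singular value of the projected data matrix), the Soft-Impute solution is Z = 0: the zero matrix minimizes f_λ(Z) = (1/2)‖P_Ω(Z) − P_Ω(X)‖_F² + λ‖Z‖_*. -/

import Mathlib

open Matrix BigOperators Finset

noncomputable section

/-- Squared Frobenius norm of a real matrix. -/
def frobSq {m n : ℕ} (A : Matrix (Fin m) (Fin n) ℝ) : ℝ :=
  ∑ i, ∑ j, (A i j) ^ 2

/-- Frobenius norm. -/
def frobNorm {m n : ℕ} (A : Matrix (Fin m) (Fin n) ℝ) : ℝ :=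
  Real.sqrt (frobSq A)

/-- The singular values of `A`, as square roots of the eigenvalues of `Aᴴ * A`. -/
def singVals {m n : ℕ} (A : Matrix (Fin m) (Fin n) ℝ) : Fin n → ℝ :=
  fun i => Real.sqrt ((show (Aᵀ * A).IsHermitian by
    simpa using Matrix.isHermitian_conjTranspose_mul_self A).eigenvalues i)

/-- Nuclear norm: the sum of the singular values. -/
def nnorm {m n : ℕ} (A : Matrix (Fin m) (Fin n) ℝ) : ℝ :=
  ∑ i, singVals A i

/-- Spectral norm: the largest singular value. -/
def specNorm {m n : ℕ} (A : Matrix (Fin m) (Fin n) ℝ) : ℝ :=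
  ⨆ i, singVals A i

/-- Projection onto the observed entries `Ω`. -/
def pO {m n : ℕ} (Ω : Finset (Fin m × Fin n)) (Y : Matrix (Fin m) (Fin n) ℝ) :
    Matrix (Fin m) (Fin n) ℝ :=
  fun i j => if (i, j) ∈ Ω then Y i j else 0

/-- Complementary projection `P_Ω^⊥ = I - P_Ω`. -/
def pOc {m n : ℕ} (Ω : Finset (Fin m × Fin n)) (Y : Matrix (Fin m) (Fin n) ℝ) :
    Matrix (Fin m) (Fin n) ℝ :=
  Y - pO Ω Y

/-- The objective `f_λ(Z) = ½‖P_Ω(Z) - P_Ω(X)‖_F² + λ‖Z‖_*`. -/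
def fObj {m n : ℕ} (Ω : Finset (Fin m × Fin n)) (X : Matrix (Fin m) (Fin n) ℝ) (lam : ℝ)
    (Z : Matrix (Fin m) (Fin n) ℝ) : ℝ :=
  (1 / 2) * frobSq (pO Ω Z - pO Ω X) + lam * nnorm Z

/-- The surrogate `Q_λ(Z | Z̃) = ½‖P_Ω(X) + P_Ω^⊥(Z̃) - Z‖_F² + λ‖Z‖_*`. -/
def qObj {m n : ℕ} (Ω : Finset (Fin m × Fin n)) (X : Matrix (Fin m) (Fin n) ℝ) (lam : ℝ)
    (Z Zt : Matrix (Fin m) (Fin n) ℝ) : ℝ :=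
  (1 / 2) * frobSq (pO Ω X + pOc Ω Zt - Z) + lam * nnorm Z

/-- `IsSVD W U d V` : `W = U D Vᵀ` is a thin SVD of `W` with strictly positive
singular values `d` and orthonormal columns in `U` and `V`. -/
def IsSVD {m n r : ℕ} (W : Matrix (Fin m) (Fin n) ℝ) (U : Matrix (Fin m) (Fin r) ℝ)
    (d : Fin r → ℝ) (V : Matrix (Fin n) (Fin r) ℝ) : Prop :=
  Uᵀ * U = 1 ∧ Vᵀ * V = 1 ∧ (∀ i, 0 < d i) ∧ W = U * Matrix.diagonal d * Vᵀ

/-- Trace inner product `⟨A, B⟩ = tr(AᵀB)`. -/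
def minner {m n : ℕ} (A B : Matrix (Fin m) (Fin n) ℝ) : ℝ :=
  ∑ i, ∑ j, A i j * B i j

/-- `G` is a subgradient of the nuclear norm at `Z`. -/
def NucSubgrad {m n : ℕ} (Z G : Matrix (Fin m) (Fin n) ℝ) : Prop :=
  ∀ Y, nnorm Z + minner G (Y - Z) ≤ nnorm Y

end

/-! The difference `f_λ(Z) - f_λ(0)` equals `½‖P_Ω Z‖_F² - ⟨P_Ω X, Z⟩ + λ‖Z‖_*`, so it suffices to
have the trace duality `⟨A, Z⟩ ≤ ‖A‖₂ ‖Z‖_*`. For that, expand `⟨A, Z⟩ = ∑ᵢ ⟨A vᵢ, Z vᵢ⟩` in an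
orthonormal eigenbasis `(vᵢ)` of `ZᵀZ`: there `‖Z vᵢ‖ = σᵢ(Z)`, while `‖A vᵢ‖ ≤ ‖A‖₂` because
`‖A v‖² = vᵀ(AᵀA)v` is at most the largest eigenvalue of `AᵀA`; Cauchy–Schwarz finishes. -/

namespace OrthonormalBasis

variable {n : Type*} [Fintype n]

theorem dotProduct_self_eq_one
    (b : OrthonormalBasis n ℝ (EuclideanSpace ℝ n)) (i : n) : ⇑(b i) ⬝ᵥ ⇑(b i) = 1 := by
  have h := b.inner_eq_one i
  rwa [EuclideanSpace.inner_eq_star_dotProduct, star_trivial] at h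

theorem sum_dotProduct_mul_dotProduct
    (b : OrthonormalBasis n ℝ (EuclideanSpace ℝ n)) (x y : n → ℝ) :
    ∑ i, (x ⬝ᵥ b i) * (b i ⬝ᵥ y) = x ⬝ᵥ y := by
  simpa [EuclideanSpace.inner_eq_star_dotProduct, dotProduct_comm, mul_comm] using
    b.sum_inner_mul_inner (WithLp.toLp 2 x) (WithLp.toLp 2 y)

end OrthonormalBasis

namespace Matrix

variable {m n : Type*} [Fintype m] [Fintype n]

omit [Fintype n] in
theorem isHermitian_transpose_mul_self (A : Matrix m n ℝ) : (Aᵀ * A).IsHermitian := by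
  simpa using isHermitian_conjTranspose_mul_self A

theorem mulVec_dotProduct_mulVec_self (A : Matrix m n ℝ) (v : n → ℝ) :
    (A *ᵥ v) ⬝ᵥ (A *ᵥ v) = v ⬝ᵥ ((Aᵀ * A) *ᵥ v) := by
  rw [← mulVec_mulVec, dotProduct_mulVec v Aᵀ, vecMul_transpose]

namespace IsHermitian

variable [DecidableEq n] {H : Matrix n n ℝ}

theorem dotProduct_mulVec_eq_sum_eigenvalues (hH : H.IsHermitian) (v : n → ℝ) :
    v ⬝ᵥ (H *ᵥ v) = ∑ k, hH.eigenvalues k * (hH.eigenvectorBasis k ⬝ᵥ v) ^ 2 := by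
  have hsymm : ∀ k, ⇑(hH.eigenvectorBasis k) ⬝ᵥ (H *ᵥ v)
      = hH.eigenvalues k * (hH.eigenvectorBasis k ⬝ᵥ v) := by
    intro k
    rw [dotProduct_mulVec, ← mulVec_transpose, ← conjTranspose_eq_transpose_of_trivial, hH.eq,
      hH.mulVec_eigenvectorBasis, smul_dotProduct, smul_eq_mul]
  rw [← hH.eigenvectorBasis.sum_dotProduct_mul_dotProduct]
  refine sum_congr rfl fun k _ => ?_
  rw [hsymm, dotProduct_comm v]
  ring

theorem dotProduct_mulVec_le (hH : H.IsHermitian) {c : ℝ} (hc : ∀ k, hH.eigenvalues k ≤ c)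
    (v : n → ℝ) : v ⬝ᵥ (H *ᵥ v) ≤ c * (v ⬝ᵥ v) := by
  rw [hH.dotProduct_mulVec_eq_sum_eigenvalues, ← hH.eigenvectorBasis.sum_dotProduct_mul_dotProduct,
    mul_sum]
  refine sum_le_sum fun k _ => ?_
  rw [dotProduct_comm v, ← sq]
  exact mul_le_mul_of_nonneg_right (hc k) (sq_nonneg _)

theorem dotProduct_mulVec_eigenvectorBasis (hH : H.IsHermitian) (k : n) :
    ⇑(hH.eigenvectorBasis k) ⬝ᵥ (H *ᵥ hH.eigenvectorBasis k) = hH.eigenvalues k := by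
  rw [hH.mulVec_eigenvectorBasis, dotProduct_smul, smul_eq_mul,
    hH.eigenvectorBasis.dotProduct_self_eq_one, mul_one]

end IsHermitian

end Matrix

section

variable {m n : ℕ}

theorem singVals_eq_sqrt_eigenvalues (A : Matrix (Fin m) (Fin n) ℝ) (i : Fin n) :
    singVals A i = √((isHermitian_transpose_mul_self A).eigenvalues i) :=
  rfl

theorem singVals_sq (A : Matrix (Fin m) (Fin n) ℝ) (i : Fin n) :
    singVals A i ^ 2 = (isHermitian_transpose_mul_self A).eigenvalues i :=
  Real.sq_sqrt (eigenvalues_conjTranspose_mul_self_nonneg A i)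

theorem singVals_nonneg (A : Matrix (Fin m) (Fin n) ℝ) (i : Fin n) : 0 ≤ singVals A i :=
  Real.sqrt_nonneg _

theorem singVals_le_specNorm (A : Matrix (Fin m) (Fin n) ℝ) (i : Fin n) :
    singVals A i ≤ specNorm A :=
  le_ciSup (Set.finite_range _).bddAbove i

theorem specNorm_nonneg (A : Matrix (Fin m) (Fin n) ℝ) : 0 ≤ specNorm A :=
  Real.iSup_nonneg (singVals_nonneg A)

theorem nnorm_nonneg (A : Matrix (Fin m) (Fin n) ℝ) : 0 ≤ nnorm A :=
  sum_nonneg fun i _ => singVals_nonneg A i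

theorem nnorm_zero : nnorm (0 : Matrix (Fin m) (Fin n) ℝ) = 0 := by
  have h : (isHermitian_transpose_mul_self (0 : Matrix (Fin m) (Fin n) ℝ)).eigenvalues = 0 :=
    (IsHermitian.eigenvalues_eq_zero_iff _).mpr (by simp)
  simp only [nnorm, singVals_eq_sqrt_eigenvalues, h, Pi.zero_apply, Real.sqrt_zero, sum_const_zero]

theorem mulVec_dotProduct_self_le_specNorm_sq (A : Matrix (Fin m) (Fin n) ℝ) (v : Fin n → ℝ) :
    (A *ᵥ v) ⬝ᵥ (A *ᵥ v) ≤ specNorm A ^ 2 * (v ⬝ᵥ v) := by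
  rw [mulVec_dotProduct_mulVec_self]
  refine (isHermitian_transpose_mul_self A).dotProduct_mulVec_le (fun k => ?_) v
  rw [← singVals_sq]
  exact pow_le_pow_left₀ (singVals_nonneg A k) (singVals_le_specNorm A k) 2

theorem mulVec_eigenvectorBasis_dotProduct_self (A : Matrix (Fin m) (Fin n) ℝ) (i : Fin n) :
    (A *ᵥ (isHermitian_transpose_mul_self A).eigenvectorBasis i) ⬝ᵥ
      (A *ᵥ (isHermitian_transpose_mul_self A).eigenvectorBasis i) = singVals A i ^ 2 := by
  rw [mulVec_dotProduct_mulVec_self, IsHermitian.dotProduct_mulVec_eigenvectorBasis, singVals_sq]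

theorem minner_eq_sum_mulVec_dotProduct_mulVec
    (b : OrthonormalBasis (Fin n) ℝ (EuclideanSpace ℝ (Fin n))) (A Z : Matrix (Fin m) (Fin n) ℝ) :
    minner A Z = ∑ i, (A *ᵥ b i) ⬝ᵥ (Z *ᵥ b i) := by
  have hrow : ∀ j, A j ⬝ᵥ Z j = ∑ i, (A *ᵥ b i) j * (Z *ᵥ b i) j := fun j => by
    rw [← b.sum_dotProduct_mul_dotProduct]
    simp only [mulVec, dotProduct_comm (b _)]
  calc minner A Z = ∑ j, A j ⬝ᵥ Z j := rfl
    _ = ∑ j, ∑ i, (A *ᵥ b i) j * (Z *ᵥ b i) j := sum_congr rfl fun j _ => hrow j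
    _ = ∑ i, (A *ᵥ b i) ⬝ᵥ (Z *ᵥ b i) := sum_comm

theorem minner_le_specNorm_mul_nnorm (A Z : Matrix (Fin m) (Fin n) ℝ) :
    minner A Z ≤ specNorm A * nnorm Z := by
  set b := (isHermitian_transpose_mul_self Z).eigenvectorBasis
  rw [minner_eq_sum_mulVec_dotProduct_mulVec b, nnorm, mul_sum]
  refine sum_le_sum fun i _ => ?_
  have hA : √((A *ᵥ b i) ⬝ᵥ (A *ᵥ b i)) ≤ specNorm A := by
    refine Real.sqrt_le_iff.mpr ⟨specNorm_nonneg A, ?_⟩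
    simpa [b.dotProduct_self_eq_one] using mulVec_dotProduct_self_le_specNorm_sq A (b i)
  have hZ : √((Z *ᵥ b i) ⬝ᵥ (Z *ᵥ b i)) = singVals Z i := by
    rw [mulVec_eigenvectorBasis_dotProduct_self, Real.sqrt_sq (singVals_nonneg Z i)]
  calc (A *ᵥ b i) ⬝ᵥ (Z *ᵥ b i)
      ≤ √((A *ᵥ b i) ⬝ᵥ (A *ᵥ b i)) * √((Z *ᵥ b i) ⬝ᵥ (Z *ᵥ b i)) := by
        simpa [dotProduct, sq] using Real.sum_mul_le_sqrt_mul_sqrt univ (A *ᵥ b i) (Z *ᵥ b i)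
    _ ≤ specNorm A * singVals Z i := by
        rw [hZ]; exact mul_le_mul_of_nonneg_right hA (singVals_nonneg Z i)

theorem frobSq_nonneg (A : Matrix (Fin m) (Fin n) ℝ) : 0 ≤ frobSq A :=
  sum_nonneg fun _ _ => sum_nonneg fun _ _ => sq_nonneg _

theorem frobSq_sub (A B : Matrix (Fin m) (Fin n) ℝ) :
    frobSq (A - B) = frobSq A - 2 * minner A B + frobSq B := by
  simp only [frobSq, minner, Matrix.sub_apply, mul_sum, ← sum_sub_distrib,
    ← sum_add_distrib]
  exact sum_congr rfl fun _ _ => sum_congr rfl fun _ _ => by ring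

theorem frobSq_neg (A : Matrix (Fin m) (Fin n) ℝ) : frobSq (-A) = frobSq A := by
  simp [frobSq]

theorem minner_comm (A B : Matrix (Fin m) (Fin n) ℝ) : minner A B = minner B A := by
  simp only [minner, mul_comm]

theorem pO_zero (Ω : Finset (Fin m × Fin n)) : pO Ω 0 = 0 := by
  ext i j
  simp [pO]

theorem minner_pO_pO (Ω : Finset (Fin m × Fin n)) (A B : Matrix (Fin m) (Fin n) ℝ) :
    minner (pO Ω A) (pO Ω B) = minner (pO Ω A) B := by
  refine sum_congr rfl fun i _ => sum_congr rfl fun j _ => ?_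
  by_cases h : (i, j) ∈ Ω <;> simp [pO, h]

theorem fObj_sub_fObj_zero (Ω : Finset (Fin m × Fin n)) (X : Matrix (Fin m) (Fin n) ℝ) (lam : ℝ)
    (Z : Matrix (Fin m) (Fin n) ℝ) :
    fObj Ω X lam Z - fObj Ω X lam 0 = frobSq (pO Ω Z) / 2 - minner (pO Ω X) Z + lam * nnorm Z := by
  have h := frobSq_sub (pO Ω Z) (pO Ω X)
  rw [minner_comm, minner_pO_pO] at h
  rw [fObj, fObj, h, pO_zero, zero_sub, frobSq_neg, nnorm_zero]
  ring

end

/-- if `λ ≥ ‖P_Ω(X)‖₂` then `Z = 0` minimizes `f_λ`. -/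
theorem zero_minimizes_for_large_lambda {m n : ℕ} (Ω : Finset (Fin m × Fin n))
    (X : Matrix (Fin m) (Fin n) ℝ) (lam : ℝ) (hlam : specNorm (pO Ω X) ≤ lam) :
    ∀ Z : Matrix (Fin m) (Fin n) ℝ, fObj Ω X lam 0 ≤ fObj Ω X lam Z := by
  intro Z
  have hduality : minner (pO Ω X) Z ≤ lam * nnorm Z :=
    (minner_le_specNorm_mul_nnorm _ _).trans (mul_le_mul_of_nonneg_right hlam (nnorm_nonneg Z))
  linarith [fObj_sub_fObj_zero Ω X lam Z, frobSq_nonneg (pO Ω Z)]
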